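/- arXiv:2203.01048 — 2 statements merged into one kernel-verified Lean document; each statement's English description precedes it below -/
import Mathlib

section
/- Let Ã₁ and Ã₂ be LR-type IVIFNs satisfying the validity conditions. Then the subtraction tuple (a₁−a₂; l_{1L}^μ+r_{2L}^μ, r_{1L}^μ+l_{2L}^μ, l'_{1U}^μ+r'_{2U}^μ, r'_{1U}^μ+l'_{2U}^μ; l_{1L}^ν+r_{2L}^ν, r_{1L}^ν+l_{2L}^ν, l'_{1U}^ν+r'_{2U}^ν, r'_{1U}^ν+l'_{2U}^ν) also satisfies the validity conditions of an LR-type IVIFN. -/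
/-- Validity conditions on the spreads of an LR-type IVIFN. -/
def IsValidIVIFN (lLμ rLμ lUμ rUμ lLν rLν lUν rUν : ℝ) : Prop :=
  0 < lLμ ∧ 0 < rLμ ∧ 0 < lUμ ∧ 0 < rUμ ∧ 0 < lLν ∧ 0 < rLν ∧ 0 < lUν ∧ 0 < rUν ∧
  lLμ ≤ lUμ ∧ rLμ ≤ rUμ ∧ lUν ≤ lLν ∧ rUν ≤ rLν ∧
  lLμ ≤ lLν ∧ rLμ ≤ rLν ∧ lUμ ≤ lUν ∧ rUμ ≤ rUν

namespace IsValidIVIFN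

/-- Negating an LR-type IVIFN exchanges its left and right spreads. -/
theorem swap {lLμ rLμ lUμ rUμ lLν rLν lUν rUν : ℝ}
    (h : IsValidIVIFN lLμ rLμ lUμ rUμ lLν rLν lUν rUν) :
    IsValidIVIFN rLμ lLμ rUμ lUμ rLν lLν rUν lUν := by
  obtain ⟨h₁, h₂, h₃, h₄, h₅, h₆, h₇, h₈, h₉, h₁₀, h₁₁, h₁₂, h₁₃, h₁₄, h₁₅, h₁₆⟩ := h
  exact ⟨h₂, h₁, h₄, h₃, h₆, h₅, h₈, h₇, h₁₀, h₉, h₁₂, h₁₁, h₁₄, h₁₃, h₁₆, h₁₅⟩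

theorem add {lLμ rLμ lUμ rUμ lLν rLν lUν rUν : ℝ}
    {lLμ' rLμ' lUμ' rUμ' lLν' rLν' lUν' rUν' : ℝ}
    (h : IsValidIVIFN lLμ rLμ lUμ rUμ lLν rLν lUν rUν)
    (h' : IsValidIVIFN lLμ' rLμ' lUμ' rUμ' lLν' rLν' lUν' rUν') :
    IsValidIVIFN (lLμ + lLμ') (rLμ + rLμ') (lUμ + lUμ') (rUμ + rUμ')
      (lLν + lLν') (rLν + rLν') (lUν + lUν') (rUν + rUν') := by
  obtain ⟨h₁, h₂, h₃, h₄, h₅, h₆, h₇, h₈, h₉, h₁₀, h₁₁, h₁₂, h₁₃, h₁₄, h₁₅, h₁₆⟩ := h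
  obtain ⟨h₁', h₂', h₃', h₄', h₅', h₆', h₇', h₈', h₉', h₁₀', h₁₁', h₁₂', h₁₃', h₁₄', h₁₅', h₁₆'⟩ :=
    h'
  exact ⟨add_pos h₁ h₁', add_pos h₂ h₂', add_pos h₃ h₃', add_pos h₄ h₄',
    add_pos h₅ h₅', add_pos h₆ h₆', add_pos h₇ h₇', add_pos h₈ h₈',
    add_le_add h₉ h₉', add_le_add h₁₀ h₁₀', add_le_add h₁₁ h₁₁', add_le_add h₁₂ h₁₂',
    add_le_add h₁₃ h₁₃', add_le_add h₁₄ h₁₄', add_le_add h₁₅ h₁₅', add_le_add h₁₆ h₁₆'⟩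

end IsValidIVIFN

/-- The subtraction tuple of two valid LR-type IVIFNs is a valid LR-type IVIFN. -/
theorem sub_IVIFN_valid
    (lLμ₁ rLμ₁ lUμ₁ rUμ₁ lLν₁ rLν₁ lUν₁ rUν₁ : ℝ)
    (lLμ₂ rLμ₂ lUμ₂ rUμ₂ lLν₂ rLν₂ lUν₂ rUν₂ : ℝ)
    (h₁ : IsValidIVIFN lLμ₁ rLμ₁ lUμ₁ rUμ₁ lLν₁ rLν₁ lUν₁ rUν₁)
    (h₂ : IsValidIVIFN lLμ₂ rLμ₂ lUμ₂ rUμ₂ lLν₂ rLν₂ lUν₂ rUν₂) :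
    IsValidIVIFN (lLμ₁ + rLμ₂) (rLμ₁ + lLμ₂) (lUμ₁ + rUμ₂) (rUμ₁ + lUμ₂)
      (lLν₁ + rLν₂) (rLν₁ + lLν₂) (lUν₁ + rUν₂) (rUν₁ + lUν₂) :=
  h₁.add h₂.swap
end

section
/- If binary variables z₁,…,z₇ ∈ {0,1} with z₁ ≤ z₂ ≤ ⋯ ≤ z₇ and real numbers d₁,…,d₇ satisfy k·z₁ ≤ d₁ ≤ K·z₁ and for each i ≥ 2, −K(z₁+⋯+z_{i−1}) + k·z_i ≤ d_i ≤ K·z_i (with 0 < k ≤ K), then the vector (d₁,…,d₇) is lexicographically ≥ the zero vector of ℝ⁷. -/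
/-!
Let `i` be the first index with `zᵢ ≠ 0`. Every earlier `zⱼ` vanishes, and so does the
penalty sum `∑_{m<j} zₘ`, so the constraints squeeze `dⱼ` between `0` and `0`; at `i` itself
the penalty still vanishes and the lower bound reads `dᵢ ≥ k zᵢ > 0`. If no such `i` exists,
every `dⱼ` is squeezed to `0`.
-/

/-- A vector of `ℝⁿ` is lexicographically ≥ 0 iff it is zero or its first
nonzero component is positive. -/
def LexNonneg {n : ℕ} (d : Fin n → ℝ) : Prop :=
  d = 0 ∨ ∃ i : Fin n, (∀ j : Fin n, j < i → d j = 0) ∧ 0 < d i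

open Finset

/-- The `i = 0` row reads `k z₀ ≤ d₀ ≤ K z₀`, the sum being empty. -/
def BigMConstraints {n : ℕ} (k K : ℝ) (z d : Fin n → ℝ) : Prop :=
  ∀ i, -K * (∑ j ∈ Iio i, z j) + k * z i ≤ d i ∧ d i ≤ K * z i

namespace BigMConstraints

variable {n : ℕ} {k K : ℝ} {z d : Fin n → ℝ}

theorem apply_eq_zero (h : BigMConstraints k K z d) {i : Fin n}
    (hz : ∀ j ≤ i, z j = 0) : d i = 0 := by
  have hsum : ∑ j ∈ Iio i, z j = 0 := sum_eq_zero fun j hj => hz j (mem_Iio.mp hj).le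
  obtain ⟨hlow, hup⟩ := h i
  rw [hsum, hz i le_rfl] at hlow
  rw [hz i le_rfl] at hup
  linarith

theorem apply_pos (h : BigMConstraints k K z d) (hk : 0 < k) {i : Fin n}
    (hzi : 0 < z i) (hz : ∀ j < i, z j = 0) : 0 < d i := by
  have hsum : ∑ j ∈ Iio i, z j = 0 := sum_eq_zero fun j hj => hz j (mem_Iio.mp hj)
  have hlow := (h i).1
  rw [hsum] at hlow
  nlinarith

theorem lexNonneg (h : BigMConstraints k K z d) (hk : 0 < k) (hz : ∀ i, 0 ≤ z i) :
    LexNonneg d := by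
  by_cases hne : ∃ i, z i ≠ 0
  · obtain ⟨i, hzi, hmin⟩ := wellFounded_lt.has_min {i | z i ≠ 0} hne
    have hbefore : ∀ j < i, z j = 0 := fun j hj => not_not.mp fun hzj => hmin j hzj hj
    refine .inr ⟨i, fun j hj => h.apply_eq_zero fun m hm => hbefore m (hm.trans_lt hj), ?_⟩
    exact h.apply_pos hk ((hz i).lt_of_ne' hzi) hbefore
  · push Not at hne
    exact .inl (funext fun i => h.apply_eq_zero fun j _ => hne j)

end BigMConstraints

theorem bigMConstraints_of_zero_of_pos {n : ℕ} {k K : ℝ} {z d : Fin (n + 1) → ℝ}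
    (h0 : k * z 0 ≤ d 0 ∧ d 0 ≤ K * z 0)
    (hi : ∀ i : Fin (n + 1), 0 < i →
      -K * (∑ j ∈ Iio i, z j) + k * z i ≤ d i ∧ d i ≤ K * z i) :
    BigMConstraints k K z d := by
  intro i
  rcases (Fin.zero_le i).eq_or_lt with rfl | hpos
  · simpa [Iio_eq_empty.mpr fun j _ => Fin.zero_le j] using h0
  · exact hi i hpos

theorem bigM_constraints_imply_lex_nonneg_general (k K : ℝ) (hk : 0 < k)
    (z d : Fin 7 → ℝ)
    (hbin : ∀ i, z i = 0 ∨ z i = 1)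
    (h0 : k * z 0 ≤ d 0 ∧ d 0 ≤ K * z 0)
    (hi : ∀ i : Fin 7, 0 < i →
      -K * (∑ j ∈ Finset.Iio i, z j) + k * z i ≤ d i ∧ d i ≤ K * z i) :
    LexNonneg d :=
  (bigMConstraints_of_zero_of_pos h0 hi).lexNonneg hk fun i => by
    rcases hbin i with h | h <;> simp [h]

/-- If binary variables `z₁ ≤ ⋯ ≤ z₇` and reals `d₁,…,d₇` satisfy the big-M
constraints, then `(d₁,…,d₇)` is lexicographically ≥ the zero vector. -/
theorem bigM_constraints_imply_lex_nonneg (k K : ℝ) (hk : 0 < k) (hkK : k ≤ K)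
    (z d : Fin 7 → ℝ)
    (hbin : ∀ i, z i = 0 ∨ z i = 1)
    (hmono : ∀ i j : Fin 7, i ≤ j → z i ≤ z j)
    (h0 : k * z 0 ≤ d 0 ∧ d 0 ≤ K * z 0)
    (hi : ∀ i : Fin 7, 0 < i →
      -K * (∑ j ∈ Finset.Iio i, z j) + k * z i ≤ d i ∧ d i ≤ K * z i) :
    LexNonneg d :=
  bigM_constraints_imply_lex_nonneg_general k K hk z d hbin h0 hi
end
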